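/- Define f₀, f₁, f₂ : ℂ² → ℂ³ by f₀(z,w) = (z², √2·zw, w²), f₁(z,w) = (−√2·z·conj w, z·conj z − w·conj w, √2·w·conj z), f₂(z,w) = ((conj w)², −√2·conj z·conj w, (conj z)²). Then for every (z,w) ∈ S³, the vectors f₀(z,w), f₁(z,w), f₂(z,w) form a unitary (orthonormal) basis of ℂ³ with respect to the standard Hermitian inner product. -/

import Mathlib

open Matrix

/-- An element of `ℂ³` (with its standard Hermitian inner product) given by coordinates. -/
noncomputable def vecE3 (a b c : ℂ) : EuclideanSpace ℂ (Fin 3) :=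
  (WithLp.equiv 2 (Fin 3 → ℂ)).symm ![a, b, c]

/-- `f₀(z,w) = (z², √2 zw, w²)`. -/
noncomputable def f₀ (p : ℂ × ℂ) : EuclideanSpace ℂ (Fin 3) :=
  vecE3 (p.1 ^ 2) ((Real.sqrt 2 : ℂ) * p.1 * p.2) (p.2 ^ 2)

/-- `f₁(z,w) = (−√2 z w̄, z z̄ − w w̄, √2 w z̄)`. -/
noncomputable def f₁ (p : ℂ × ℂ) : EuclideanSpace ℂ (Fin 3) :=
  vecE3 (-((Real.sqrt 2 : ℂ) * p.1 * (starRingEnd ℂ) p.2))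
    (p.1 * (starRingEnd ℂ) p.1 - p.2 * (starRingEnd ℂ) p.2)
    ((Real.sqrt 2 : ℂ) * p.2 * (starRingEnd ℂ) p.1)

/-- `f₂(z,w) = (w̄², −√2 z̄ w̄, z̄²)`. -/
noncomputable def f₂ (p : ℂ × ℂ) : EuclideanSpace ℂ (Fin 3) :=
  vecE3 (((starRingEnd ℂ) p.2) ^ 2)
    (-((Real.sqrt 2 : ℂ) * (starRingEnd ℂ) p.1 * (starRingEnd ℂ) p.2))
    (((starRingEnd ℂ) p.1) ^ 2)

/-!
The three maps are pairwise orthogonal identically in `(z, w)`, and each has norm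
`‖z‖² + ‖w‖²`: both are polynomial identities in `z, w, z̄, w̄` once `√2² = 2` is used.
(On `S³` they are the columns of `Sym²` of the unitary matrix `[[z, -w̄], [w, z̄]]`.)
Hence on `S³` they are orthonormal, and three orthonormal vectors span `ℂ³`.
-/

open ComplexConjugate

lemma inner_vecE3 (a b c a' b' c' : ℂ) :
    inner ℂ (vecE3 a b c) (vecE3 a' b' c') = conj a * a' + conj b * b' + conj c * c' := by
  simp [vecE3, PiLp.inner_apply, Fin.sum_univ_three, mul_comm]

lemma norm_vecE3_sq (a b c : ℂ) : ‖vecE3 a b c‖ ^ 2 = ‖a‖ ^ 2 + ‖b‖ ^ 2 + ‖c‖ ^ 2 := by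
  simp [vecE3, EuclideanSpace.norm_sq_eq, Fin.sum_univ_three]

lemma ofReal_sqrt_two_sq : ((√2 : ℝ) : ℂ) ^ 2 = 2 := by
  exact_mod_cast Real.sq_sqrt zero_le_two

lemma inner_f₀_f₁ (p : ℂ × ℂ) : inner ℂ (f₀ p) (f₁ p) = 0 := by
  rw [f₀, f₁, inner_vecE3]
  simp only [map_mul, map_pow, Complex.conj_ofReal]
  ring

lemma inner_f₁_f₂ (p : ℂ × ℂ) : inner ℂ (f₁ p) (f₂ p) = 0 := by
  rw [f₁, f₂, inner_vecE3]
  simp only [map_mul, map_neg, map_sub, Complex.conj_ofReal, Complex.conj_conj]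
  ring

lemma inner_f₀_f₂ (p : ℂ × ℂ) : inner ℂ (f₀ p) (f₂ p) = 0 := by
  rw [f₀, f₂, inner_vecE3]
  simp only [map_mul, map_pow, Complex.conj_ofReal]
  linear_combination (-conj p.1 ^ 2 * conj p.2 ^ 2) * ofReal_sqrt_two_sq

lemma norm_f₀_sq (p : ℂ × ℂ) : ‖f₀ p‖ ^ 2 = (‖p.1‖ ^ 2 + ‖p.2‖ ^ 2) ^ 2 := by
  rw [f₀, norm_vecE3_sq]
  simp only [norm_pow, norm_mul, Complex.norm_real, Real.norm_eq_abs, mul_pow, sq_abs,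
    Real.sq_sqrt zero_le_two]
  ring

lemma norm_f₁_sq (p : ℂ × ℂ) : ‖f₁ p‖ ^ 2 = (‖p.1‖ ^ 2 + ‖p.2‖ ^ 2) ^ 2 := by
  rw [f₁, norm_vecE3_sq, Complex.mul_conj', Complex.mul_conj', ← Complex.ofReal_pow,
    ← Complex.ofReal_pow, ← Complex.ofReal_sub]
  simp only [norm_neg, norm_mul, Complex.norm_real, Complex.norm_conj, Real.norm_eq_abs, mul_pow,
    sq_abs, Real.sq_sqrt zero_le_two]
  ring

lemma norm_f₂_sq (p : ℂ × ℂ) : ‖f₂ p‖ ^ 2 = (‖p.1‖ ^ 2 + ‖p.2‖ ^ 2) ^ 2 := by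
  rw [f₂, norm_vecE3_sq]
  simp only [norm_neg, norm_pow, norm_mul, Complex.norm_real, Complex.norm_conj, Real.norm_eq_abs,
    mul_pow, sq_abs, Real.sq_sqrt zero_le_two]
  ring

theorem f_frame_unitary (p : ℂ × ℂ) (hp : ‖p.1‖ ^ 2 + ‖p.2‖ ^ 2 = 1) :
    Orthonormal ℂ ![f₀ p, f₁ p, f₂ p] ∧
    Submodule.span ℂ (Set.range ![f₀ p, f₁ p, f₂ p]) = ⊤ := by
  have unit_of_sq {v : EuclideanSpace ℂ (Fin 3)} (hv : ‖v‖ ^ 2 = (‖p.1‖ ^ 2 + ‖p.2‖ ^ 2) ^ 2) :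
      ‖v‖ = 1 := by
    rwa [hp, one_pow, pow_eq_one_iff_of_nonneg (norm_nonneg v) two_ne_zero] at hv
  have horth : Orthonormal ℂ ![f₀ p, f₁ p, f₂ p] := by
    refine ⟨fun i ↦ ?_, fun i j hij ↦ ?_⟩
    · fin_cases i
      exacts [unit_of_sq (norm_f₀_sq p), unit_of_sq (norm_f₁_sq p), unit_of_sq (norm_f₂_sq p)]
    · fin_cases i <;> fin_cases j <;> simp only [ne_eq, not_true_eq_false] at hij <;>
        simp [inner_f₀_f₁, inner_f₀_f₂, inner_f₁_f₂, inner_eq_zero_symm.1]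
  refine ⟨horth, horth.linearIndependent.span_eq_top_of_card_eq_finrank ?_⟩
  simp
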